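/- INML is a conservative extension of IMLL: if A is an IMLL formula (containing no occurrence of ◁) and the sequent ⊢ A is derivable in the cut-free sequent calculus INML, then ⊢ A is derivable in the sequent calculus IMLL. -/
import Mathlib


/-- INML formulas: A ::= a | 1 | A⊗A | A⊸A | A◁A. -/
inductive INMLF : Type
  | atom : ℕ → INMLF
  | one : INMLF
  | tens : INMLF → INMLF → INMLF
  | limp : INMLF → INMLF → INMLF
  | seq : INMLF → INMLF → INMLF

open INMLF

/-- The sequent calculus INML: IMLL plus the ◁-rule, on sequents Γ ⊢ A with Γ a
    multiset of formulas.  The ◁-rule takes a list L of n ≥ 0 pairs (Aᵢ,Bᵢ):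
    from Γ,A₁,…,Aₙ ⊢ A and Δ,B₁,…,Bₙ ⊢ B infer Γ,Δ,A₁◁B₁,…,Aₙ◁Bₙ ⊢ A◁B. -/
inductive INML : Multiset INMLF → INMLF → Prop
  | ax (a : ℕ) : INML {atom a} (atom a)
  | impR {Γ : Multiset INMLF} {A B : INMLF} :
      INML (A ::ₘ Γ) B → INML Γ (limp A B)
  | impL {Γ Δ : Multiset INMLF} {A B C : INMLF} :
      INML Γ A → INML (B ::ₘ Δ) C → INML (limp A B ::ₘ (Γ + Δ)) C
  | oneR : INML 0 one
  | oneL {Γ : Multiset INMLF} {A : INMLF} :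
      INML Γ A → INML (one ::ₘ Γ) A
  | tensL {Γ : Multiset INMLF} {A B C : INMLF} :
      INML (A ::ₘ B ::ₘ Γ) C → INML (tens A B ::ₘ Γ) C
  | tensR {Γ Δ : Multiset INMLF} {A B : INMLF} :
      INML Γ A → INML Δ B → INML (Γ + Δ) (tens A B)
  | seqR {Γ Δ : Multiset INMLF} {A B : INMLF} (L : List (INMLF × INMLF)) :
      INML (Γ + ↑(L.map Prod.fst)) A →
      INML (Δ + ↑(L.map Prod.snd)) B →
      INML (Γ + Δ + ↑(L.map fun p => seq p.1 p.2)) (seq A B)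

/-- IMLL as a subsystem of INML: the same rules without the ◁-rule. -/
inductive IMLL : Multiset INMLF → INMLF → Prop
  | ax (a : ℕ) : IMLL {atom a} (atom a)
  | impR {Γ : Multiset INMLF} {A B : INMLF} :
      IMLL (A ::ₘ Γ) B → IMLL Γ (limp A B)
  | impL {Γ Δ : Multiset INMLF} {A B C : INMLF} :
      IMLL Γ A → IMLL (B ::ₘ Δ) C → IMLL (limp A B ::ₘ (Γ + Δ)) C
  | oneR : IMLL 0 one
  | oneL {Γ : Multiset INMLF} {A : INMLF} :
      IMLL Γ A → IMLL (one ::ₘ Γ) A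
  | tensL {Γ : Multiset INMLF} {A B C : INMLF} :
      IMLL (A ::ₘ B ::ₘ Γ) C → IMLL (tens A B ::ₘ Γ) C
  | tensR {Γ Δ : Multiset INMLF} {A B : INMLF} :
      IMLL Γ A → IMLL Δ B → IMLL (Γ + Δ) (tens A B)

/-- A formula is ◁-free if it contains no occurrence of the seq connective. -/
def INMLF.seqFree : INMLF → Prop
  | .atom _ => True
  | .one => True
  | .tens A B => A.seqFree ∧ B.seqFree
  | .limp A B => A.seqFree ∧ B.seqFree
  | .seq _ _ => False


theorem INML.toIMLL {Γ : Multiset INMLF} {A : INMLF} (h : INML Γ A)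
    (hΓ : ∀ C ∈ Γ, C.seqFree) (hA : A.seqFree) : IMLL Γ A := by
  induction h with
  | ax a => exact IMLL.ax a
  | impR h ih =>
      obtain ⟨h1, h2⟩ := hA
      exact IMLL.impR (ih (fun C hC => by
        rcases Multiset.mem_cons.1 hC with rfl | hC
        · exact h1
        · exact hΓ C hC) h2)
  | @impL Γ Δ A B C h1 h2 ih1 ih2 =>
      have hAB : (INMLF.limp A B).seqFree := hΓ _ (Multiset.mem_cons_self _ _)
      obtain ⟨ha, hb⟩ := hAB
      have hg : ∀ D ∈ Γ + Δ, D.seqFree := fun D hD =>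
        hΓ D (Multiset.mem_cons_of_mem hD)
      exact IMLL.impL
        (ih1 (fun D hD => hg D (Multiset.mem_add.2 (Or.inl hD))) ha)
        (ih2 (fun D hD => by
          rcases Multiset.mem_cons.1 hD with rfl | hD
          · exact hb
          · exact hg D (Multiset.mem_add.2 (Or.inr hD))) hA)
  | oneR => exact IMLL.oneR
  | oneL h ih =>
      exact IMLL.oneL (ih (fun C hC => hΓ C (Multiset.mem_cons_of_mem hC)) hA)
  | @tensL Γ A B C h ih =>
      have hAB : (INMLF.tens A B).seqFree := hΓ _ (Multiset.mem_cons_self _ _)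
      obtain ⟨ha, hb⟩ := hAB
      exact IMLL.tensL (ih (fun D hD => by
        rcases Multiset.mem_cons.1 hD with rfl | hD
        · exact ha
        rcases Multiset.mem_cons.1 hD with rfl | hD
        · exact hb
        · exact hΓ D (Multiset.mem_cons_of_mem hD)) hA)
  | tensR h1 h2 ih1 ih2 =>
      obtain ⟨ha, hb⟩ := hA
      exact IMLL.tensR
        (ih1 (fun D hD => hΓ D (Multiset.mem_add.2 (Or.inl hD))) ha)
        (ih2 (fun D hD => hΓ D (Multiset.mem_add.2 (Or.inr hD))) hb)
  | seqR L h1 h2 ih1 ih2 => exact hA.elim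

/-- INML is a conservative extension of IMLL: every ◁-free formula provable in
    the cut-free sequent calculus INML is provable in IMLL. -/
theorem INML.conservative_over_IMLL {A : INMLF} (hA : A.seqFree)
    (h : INML 0 A) : IMLL 0 A := by
  exact h.toIMLL (fun C hC => by simp at hC) hA
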